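/- For every prime p and e_1 ≥ e_2 ≥ 1: Σ_{1 ≤ k ≤ p^{e_1}, gcd(k,p)=1} c_{p^{e_1}}(k−1) c_{p^{e_2}}(k−1) equals 0 if e_1 > e_2, equals p^{2e−1}(p−1) if e_1 = e_2 = e > 1, and equals p² − p − 1 if e_1 = e_2 = 1. -/

import Mathlib

/-!
Since `μ (p ^ j) = 0` for `j ≥ 2`, only the divisors `p ^ e` and `p ^ (e - 1)` contribute, so
`c_{p^e}(m) = p^e [p^e ∣ m] - p^(e-1) [p^(e-1) ∣ m]` for `e ≥ 1`. A product of two such sums is an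
integer combination of indicators `[p^a ∣ m]`, because `[p^a ∣ m] [p^b ∣ m] = [p^(max a b) ∣ m]`.
Among the `k ≤ p^e` prime to `p`, exactly `p^(e-a)` satisfy `p^a ∣ k - 1` when `1 ≤ a ≤ e` (such
`k` are automatically prime to `p`), and all `φ(p^e)` of them do when `a = 0`.
-/

open Finset ArithmeticFunction
open scoped ArithmeticFunction.Moebius

/-- The Ramanujan sum `c_n(k) = ∑_{d ∣ gcd(k,n)} d · μ(n/d)`, for integer `k`. -/
def ramanujanSum (n : ℕ) (k : ℤ) : ℤ :=
  ∑ d ∈ (Int.gcd k n).divisors, (d : ℤ) * μ (n / d)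

theorem ramanujanSum_eq_sum_divisors {n : ℕ} (hn : n ≠ 0) (k : ℤ) :
    ramanujanSum n k = ∑ d ∈ n.divisors, if (d : ℤ) ∣ k then (d : ℤ) * μ (n / d) else 0 := by
  have hdiv : (Int.gcd k n).divisors = n.divisors.filter (fun d : ℕ => (d : ℤ) ∣ k) := by
    ext d
    simp only [Nat.mem_divisors, mem_filter]
    constructor
    · rintro ⟨hd, -⟩
      exact ⟨⟨hd.trans (by simpa using Int.gcd_dvd_natAbs_right k n), hn⟩,
        (Int.natCast_dvd_natCast.mpr hd).trans (Int.gcd_dvd_left k n)⟩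
    · rintro ⟨⟨hd, -⟩, hdk⟩
      exact ⟨Int.dvd_gcd hdk (Int.natCast_dvd_natCast.mpr hd),
        Int.gcd_ne_zero_right (by exact_mod_cast hn)⟩
  rw [ramanujanSum, hdiv, sum_filter]

theorem ramanujanSum_prime_pow_succ {p : ℕ} (hp : p.Prime) (f : ℕ) (m : ℤ) :
    ramanujanSum (p ^ (f + 1)) m =
      (p : ℤ) ^ (f + 1) * (if (p : ℤ) ^ (f + 1) ∣ m then 1 else 0)
        - (p : ℤ) ^ f * (if (p : ℤ) ^ f ∣ m then 1 else 0) := by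
  have hμ : ∀ i ≤ f + 1, μ (p ^ (f + 1) / p ^ i) = μ (p ^ (f + 1 - i)) := fun i hi => by
    rw [Nat.pow_div hi hp.pos]
  rw [ramanujanSum_eq_sum_divisors (pow_ne_zero _ hp.ne_zero), Nat.sum_divisors_prime_pow hp,
    sum_range_succ, sum_range_succ, sum_eq_zero, hμ _ (by omega), hμ _ le_rfl]
  · rw [Nat.add_sub_cancel_left, Nat.sub_self, pow_one, pow_zero, moebius_apply_prime hp,
      moebius_apply_one]
    push_cast
    split_ifs <;> ring
  · intro i hi
    rw [mem_range] at hi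
    rw [hμ i (by omega), moebius_apply_prime_pow hp (by omega),
      if_neg (show f + 1 - i ≠ 1 by omega), mul_zero, ite_self]

theorem ite_pow_dvd_mul_ite_pow_dvd {M R : Type*} [Monoid M] [DecidableRel (α := M) (· ∣ ·)]
    [MulZeroOneClass R] (x m : M) (a b : ℕ) :
    ((if x ^ a ∣ m then 1 else 0) * (if x ^ b ∣ m then 1 else 0) : R) =
      if x ^ max a b ∣ m then 1 else 0 := by
  rw [ite_zero_mul_ite_zero, one_mul]
  rcases le_total a b with h | h
  · rw [max_eq_right h]
    exact if_congr ⟨And.right, fun hb => ⟨(pow_dvd_pow x h).trans hb, hb⟩⟩ rfl rfl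
  · rw [max_eq_left h]
    exact if_congr ⟨And.left, fun ha => ⟨ha, (pow_dvd_pow x h).trans ha⟩⟩ rfl rfl

theorem Nat.card_filter_Ico_modEq_of_dvd {d N : ℕ} (hd : d ∣ N) (n v : ℕ) :
    #{x ∈ Ico n (n + N) | x ≡ v [MOD d]} = N / d := by
  rcases Nat.eq_zero_or_pos d with rfl | hd0
  · simp [Nat.eq_zero_of_zero_dvd hd]
  have hper : Function.Periodic (fun x => x ≡ v [MOD d]) N := fun x => by
    simp only [eq_iff_iff]
    exact ⟨fun h => ((Nat.modEq_zero_iff_dvd.mpr hd).add_left x).symm.trans h,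
      fun h => ((Nat.modEq_zero_iff_dvd.mpr hd).add_left x).trans h⟩
  rw [Nat.filter_Ico_card_eq_of_periodic _ _ _ hper, Nat.count_modEq_card _ hd0,
    Nat.mod_eq_zero_of_dvd hd]
  simp

theorem Nat.Icc_one_eq_Ico_one_add (n : ℕ) : Icc 1 n = Ico 1 (1 + n) := by
  rw [add_comm, Ico_add_one_right_eq_Icc]

theorem card_filter_gcd_eq_one_Icc_pow {p e : ℕ} (he : e ≠ 0) :
    #{k ∈ Icc 1 (p ^ e) | Nat.gcd k p = 1} = Nat.totient (p ^ e) := by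
  rw [← Nat.filter_coprime_Ico_eq_totient (p ^ e) 1, ← Nat.Icc_one_eq_Ico_one_add]
  refine congrArg card (filter_congr fun k _ => ?_)
  rw [Nat.coprime_pow_left_iff (Nat.pos_of_ne_zero he), Nat.coprime_comm]

theorem sum_filter_gcd_eq_one_ite_pow_dvd_sub_one {p a e : ℕ} (hp : p ≠ 0) (ha : a ≠ 0)
    (hae : a ≤ e) :
    ∑ k ∈ (Icc 1 (p ^ e)).filter (fun k => Nat.gcd k p = 1),
      (if (p : ℤ) ^ a ∣ (k : ℤ) - 1 then (1 : ℤ) else 0) = (p : ℤ) ^ (e - a) := by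
  have hmodEq : ∀ k : ℕ, Nat.gcd k p = 1 ∧ (p : ℤ) ^ a ∣ (k : ℤ) - 1 ↔ k ≡ 1 [MOD p ^ a] := by
    intro k
    have hdvd : (p : ℤ) ^ a ∣ (k : ℤ) - 1 ↔ k ≡ 1 [MOD p ^ a] := by
      rw [Nat.ModEq.comm, Nat.modEq_iff_dvd, Nat.cast_pow, Nat.cast_one]
    rw [hdvd]
    refine ⟨And.right, fun hk => ⟨?_, hk⟩⟩
    have hcop : Nat.Coprime k (p ^ a) := by rw [Nat.Coprime, hk.gcd_eq, Nat.gcd_one_left]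
    exact hcop.coprime_dvd_right (dvd_pow_self p ha)
  rw [sum_boole, filter_filter, Nat.Icc_one_eq_Ico_one_add, filter_congr fun k _ => hmodEq k,
    Nat.card_filter_Ico_modEq_of_dvd (pow_dvd_pow p hae), Nat.pow_div hae (Nat.pos_of_ne_zero hp),
    Nat.cast_pow]

theorem ramanujanSum_prime_pow_succ_mul {p : ℕ} (hp : p.Prime) {d g : ℕ} (hdg : d ≤ g)
    (m : ℤ) :
    ramanujanSum (p ^ (g + 1)) m * ramanujanSum (p ^ (d + 1)) m =
      ((p : ℤ) ^ (g + d + 2) - (p : ℤ) ^ (g + d + 1)) * (if (p : ℤ) ^ (g + 1) ∣ m then 1 else 0)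
        - (p : ℤ) ^ (g + d + 1) * (if (p : ℤ) ^ max g (d + 1) ∣ m then 1 else 0)
        + (p : ℤ) ^ (g + d) * (if (p : ℤ) ^ g ∣ m then 1 else 0) := by
  have hI := ite_pow_dvd_mul_ite_pow_dvd (R := ℤ) (p : ℤ) m
  have h₁ := hI (g + 1) (d + 1)
  have h₂ := hI (g + 1) d
  have h₃ := hI g (d + 1)
  have h₄ := hI g d
  rw [max_eq_left (by omega : d + 1 ≤ g + 1)] at h₁
  rw [max_eq_left (by omega : d ≤ g + 1)] at h₂
  rw [max_eq_left hdg] at h₄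
  rw [ramanujanSum_prime_pow_succ hp, ramanujanSum_prime_pow_succ hp]
  linear_combination (p : ℤ) ^ (g + d + 2) * h₁ - (p : ℤ) ^ (g + d + 1) * h₂
    - (p : ℤ) ^ (g + d + 1) * h₃ + (p : ℤ) ^ (g + d) * h₄

theorem eval_R_two_prime_powers (p : ℕ) (hp : p.Prime) (e₁ e₂ : ℕ)
    (h21 : e₂ ≤ e₁) (h2 : 1 ≤ e₂) :
    ∑ k ∈ (Icc 1 (p ^ e₁)).filter (fun k => Nat.gcd k p = 1),
      ramanujanSum (p ^ e₁) ((k : ℤ) - 1) * ramanujanSum (p ^ e₂) ((k : ℤ) - 1) =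
    if e₂ < e₁ then 0
    else if 1 < e₁ then (p : ℤ) ^ (2 * e₁ - 1) * ((p : ℤ) - 1)
    else (p : ℤ) ^ 2 - (p : ℤ) - 1 := by
  obtain ⟨g, rfl⟩ : ∃ g, e₁ = g + 1 := ⟨e₁ - 1, by omega⟩
  obtain ⟨d, rfl⟩ : ∃ d, e₂ = d + 1 := ⟨e₂ - 1, by omega⟩
  have hcount := fun a (ha : a ≠ 0) (hag : a ≤ g + 1) =>
    sum_filter_gcd_eq_one_ite_pow_dvd_sub_one hp.ne_zero ha hag
  simp only [ramanujanSum_prime_pow_succ_mul hp (by omega : d ≤ g)]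
  rw [sum_add_distrib, sum_sub_distrib, ← mul_sum, ← mul_sum, ← mul_sum,
    hcount (g + 1) (by omega) le_rfl, Nat.sub_self]
  rcases Nat.lt_or_eq_of_le (show d ≤ g by omega) with hdg | rfl
  · rw [max_eq_left hdg, hcount g (by omega) (by omega), if_pos (by omega),
      show g + 1 - g = 1 by omega]
    ring
  · rw [max_eq_right d.le_succ, if_neg (lt_irrefl _), hcount (d + 1) (by omega) le_rfl,
      Nat.sub_self]
    rcases Nat.eq_zero_or_pos d with rfl | hd
    · simp only [pow_zero, one_dvd, if_true, sum_const, nsmul_one]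
      rw [card_filter_gcd_eq_one_Icc_pow (by omega), if_neg (lt_irrefl _)]
      simp only [zero_add, pow_one, Nat.totient_prime hp, Nat.cast_sub hp.one_le]
      push_cast
      ring
    · rw [hcount d (by omega) (by omega), if_pos (by omega), show d + 1 - d = 1 by omega,
        show 2 * (d + 1) - 1 = 2 * d + 1 by omega]
      ring
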